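/- The symmetric operad presented by generators i, i′ of arity 0 and b, b′ of arity 2, subject to the relations b ∘ (id, i) = id, b ∘ (i, id) = id, b′ ∘ (id, i′) = id, b′ ∘ (i′, id) = id, and b ∘ (b′, b′) = (2 3) · (b′ ∘ (b, b)), is the terminal symmetric operad (the operad for commutative monoids). In particular, in this presented operad one has i = i′, b = b′, b = (1 2) · b, and b ∘ (id, b) = b ∘ (b, id). -/

import Mathlib

universe u

/-- The canonical (order-preserving) equivalence between a sigma type of `Fin`s
and `Fin` of the sum: it realises the "standard" concatenation order. -/
noncomputable def finSigma {m : ℕ} (k : Fin m → ℕ) :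
    (Σ i, Fin (k i)) ≃ Fin (∑ i, k i) :=
  letI : Fintype (Σₗ i, Fin (k i)) := inferInstanceAs (Fintype (Σ i, Fin (k i)))
  (toLex : (Σ i, Fin (k i)) ≃ (Σₗ i, Fin (k i))).trans
    (Fintype.orderIsoFinOfCardEq (Σₗ i, Fin (k i))
      (by exact (Fintype.card_sigma (α := fun i => Fin (k i))).trans (by simp))).symm.toEquiv

/-- The block-sum permutation `t₁ ⊕ ⋯ ⊕ t_m` of `Fin (∑ i, k i)`. -/
noncomputable def blockSumPerm {m : ℕ} (k : Fin m → ℕ)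
    (t : ∀ i, Equiv.Perm (Fin (k i))) : Equiv.Perm (Fin (∑ i, k i)) :=
  ((finSigma k).symm.trans (Equiv.sigmaCongrRight t)).trans (finSigma k)

/-- The block permutation of `Fin (∑ i, k i)` induced by a permutation `t` of the blocks. -/
noncomputable def blockPerm {m : ℕ} (k : Fin m → ℕ) (t : Equiv.Perm (Fin m)) :
    Equiv.Perm (Fin (∑ i, k i)) :=
  ((finCongr (Equiv.sum_comp t k)).symm.trans
    ((finSigma fun i => k (t i)).symm.trans
      ((Equiv.sigmaCongrLeft (β := fun i => Fin (k i)) t).trans (finSigma k))))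

/-- A plain (non-symmetric) operad: a monoid in strongly analytic endofunctors of `Set`,
presented concretely by a family of sets of operations indexed by arity, an identity
operation, and composition, satisfying associativity and unit laws. -/
structure PlainOperad : Type (u + 1) where
  ops : ℕ → Type u
  unit : ops 1
  comp : ∀ {m : ℕ}, ops m → ∀ k : Fin m → ℕ, (∀ i, ops (k i)) → ops (∑ i, k i)
  comp_unit : ∀ {m : ℕ} (ρ : ops m), HEq (comp ρ (fun _ => 1) fun _ => unit) ρ
  unit_comp : ∀ {n : ℕ} (ρ : ops n), HEq (comp unit (fun _ => n) fun _ => ρ) ρ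
  comp_assoc : ∀ {m : ℕ} (ρ : ops m) (k : Fin m → ℕ) (f : ∀ i, ops (k i))
      (l : (Σ i : Fin m, Fin (k i)) → ℕ) (g : ∀ p, ops (l p)),
      HEq (comp (comp ρ k f) (fun j => l ((finSigma k).symm j))
            (fun j => g ((finSigma k).symm j)))
          (comp ρ (fun i => ∑ j : Fin (k i), l ⟨i, j⟩)
            (fun i => comp (f i) (fun j => l ⟨i, j⟩) (fun j => g ⟨i, j⟩)))

/-- A symmetric operad: a monoid in analytic endofunctors of `Set`, presented concretely:
a plain operad structure together with symmetric group actions satisfying the two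
equivariance axioms. -/
structure SymmetricOperad : Type (u + 1) where
  ops : ℕ → Type u
  unit : ops 1
  comp : ∀ {m : ℕ}, ops m → ∀ k : Fin m → ℕ, (∀ i, ops (k i)) → ops (∑ i, k i)
  act : ∀ {n : ℕ}, Equiv.Perm (Fin n) → ops n → ops n
  act_one : ∀ {n : ℕ} (ρ : ops n), act 1 ρ = ρ
  act_mul : ∀ {n : ℕ} (s t : Equiv.Perm (Fin n)) (ρ : ops n),
      act (s * t) ρ = act s (act t ρ)
  comp_unit : ∀ {m : ℕ} (ρ : ops m), HEq (comp ρ (fun _ => 1) fun _ => unit) ρ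
  unit_comp : ∀ {n : ℕ} (ρ : ops n), HEq (comp unit (fun _ => n) fun _ => ρ) ρ
  comp_assoc : ∀ {m : ℕ} (ρ : ops m) (k : Fin m → ℕ) (f : ∀ i, ops (k i))
      (l : (Σ i : Fin m, Fin (k i)) → ℕ) (g : ∀ p, ops (l p)),
      HEq (comp (comp ρ k f) (fun j => l ((finSigma k).symm j))
            (fun j => g ((finSigma k).symm j)))
          (comp ρ (fun i => ∑ j : Fin (k i), l ⟨i, j⟩)
            (fun i => comp (f i) (fun j => l ⟨i, j⟩) (fun j => g ⟨i, j⟩)))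
  act_comp : ∀ {m : ℕ} (ρ : ops m) (k : Fin m → ℕ) (f : ∀ i, ops (k i))
      (t : ∀ i, Equiv.Perm (Fin (k i))),
      comp ρ k (fun i => act (t i) (f i)) = act (blockSumPerm k t) (comp ρ k f)
  comp_act : ∀ {m : ℕ} (t : Equiv.Perm (Fin m)) (ρ : ops m) (k : Fin m → ℕ)
      (f : ∀ i, ops (k i)),
      HEq (comp (act t ρ) (fun i => k (t i)) (fun i => f (t i)))
          (act (blockPerm k t) (comp ρ k f))

/-- Forget the symmetric group actions of a symmetric operad. -/
def SymmetricOperad.toPlain (A : SymmetricOperad.{u}) : PlainOperad.{u} where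
  ops := A.ops
  unit := A.unit
  comp := A.comp
  comp_unit := A.comp_unit
  unit_comp := A.unit_comp
  comp_assoc := A.comp_assoc

/-- Morphisms of plain operads. -/
structure PlainOperad.Hom (P Q : PlainOperad.{u}) : Type u where
  app : ∀ n, P.ops n → Q.ops n
  app_unit : app 1 P.unit = Q.unit
  app_comp : ∀ {m : ℕ} (ρ : P.ops m) (k : Fin m → ℕ) (f : ∀ i, P.ops (k i)),
      app _ (P.comp ρ k f) = Q.comp (app m ρ) k fun i => app _ (f i)

/-- Morphisms of symmetric operads. -/
structure SymmetricOperad.Hom (A B : SymmetricOperad.{u}) : Type u where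
  app : ∀ n, A.ops n → B.ops n
  app_unit : app 1 A.unit = B.unit
  app_comp : ∀ {m : ℕ} (ρ : A.ops m) (k : Fin m → ℕ) (f : ∀ i, A.ops (k i)),
      app _ (A.comp ρ k f) = B.comp (app m ρ) k fun i => app _ (f i)
  app_act : ∀ {n : ℕ} (t : Equiv.Perm (Fin n)) (ρ : A.ops n),
      app n (A.act t ρ) = B.act t (app n ρ)

/-- `A` is (isomorphic to) the symmetrisation of the plain operad `P`: the universal
property of the left adjoint of the forgetful functor `SymmOp ⥤ PlainOp`. -/
def IsSymmetrisation (A : SymmetricOperad.{u}) (P : PlainOperad.{u}) : Prop :=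
  ∃ ι : P.Hom A.toPlain, ∀ (B : SymmetricOperad.{u}) (g : P.Hom B.toPlain),
    ∃! h : A.Hom B, ∀ (n : ℕ) (ρ : P.ops n), h.app n (ι.app n ρ) = g.app n ρ

/-- The free plain operad on a collection `ar : J → ℕ`: planar trees with
nodes labelled by elements of `J`. -/
inductive FreePlain (J : Type u) (ar : J → ℕ) : ℕ → Type u
  | leaf : FreePlain J ar 1
  | node (x : J) (k : Fin (ar x) → ℕ) (c : ∀ i, FreePlain J ar (k i)) :
      FreePlain J ar (∑ i, k i)

namespace FreePlain

variable {J : Type u} {ar : J → ℕ}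

/-- Transport a tree along an equality of arities. -/
def cast {m n : ℕ} (h : m = n) (t : FreePlain J ar m) : FreePlain J ar n := h ▸ t

/-- Interpret a free-operad element (a tree) in a plain operad, given an
interpretation of the generators. -/
def eval (P : PlainOperad.{u}) (ι : ∀ x : J, P.ops (ar x)) :
    ∀ {n : ℕ}, FreePlain J ar n → P.ops n
  | _, .leaf => P.unit
  | _, .node x k c => P.comp (ι x) k fun i => eval P ι (c i)

/-- A generator, as a tree of height one. -/
def of (x : J) : FreePlain J ar (ar x) :=
  cast (by simp) (node x (fun _ => 1) fun _ => leaf)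

/-- A nullary generator, as a tree. -/
def of0 (x : J) (h : ar x = 0) : FreePlain J ar 0 :=
  cast (h ▸ rfl : ar x = 0) (of x)

/-- Pairing for dependent functions out of `Fin 2`. -/
def pairFun {α : Fin 2 → Sort*} (a : α 0) (b : α 1) : ∀ i, α i
  | ⟨0, _⟩ => a
  | ⟨1, _⟩ => b

/-- A binary generator applied to two trees. -/
def of2 (x : J) (h : ar x = 2) {p q : ℕ}
    (a : FreePlain J ar p) (b : FreePlain J ar q) : FreePlain J ar (p + q) :=
  cast (by
      have e : ∑ i : Fin (ar x), ![p, q] (Fin.cast h i) = ∑ j : Fin 2, ![p, q] j :=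
        Fintype.sum_equiv (finCongr h) _ _ fun i => rfl
      rw [e]; simp [Fin.sum_univ_two])
    (node x (fun i => ![p, q] (Fin.cast h i))
      (fun i => pairFun (α := fun j : Fin 2 => FreePlain J ar (![p, q] j)) a b (Fin.cast h i)))

end FreePlain

/-- A presentation for a symmetric operad: generators `J` with arities `ar`, and
relations indexed by `R`, each being a parallel pair of elements of the underlying
collection `Σ n, Sₙ × J^∞[n]` of the free symmetric operad on `(J, ar)`. -/
structure SymmPresentation (J : Type u) (ar : J → ℕ) : Type (u + 1) where
  R : Type u
  relN : R → ℕ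
  lhsPerm : ∀ r, Equiv.Perm (Fin (relN r))
  lhsTree : ∀ r, FreePlain J ar (relN r)
  rhsPerm : ∀ r, Equiv.Perm (Fin (relN r))
  rhsTree : ∀ r, FreePlain J ar (relN r)

/-- A symmetric operad `A`, with an interpretation `ι` of the generators, satisfies a
presentation if the two sides of every relation become equal in `A`. -/
def SymmetricOperad.Satisfies (A : SymmetricOperad.{u}) {J : Type u} {ar : J → ℕ}
    (ι : ∀ x : J, A.ops (ar x)) (P : SymmPresentation J ar) : Prop :=
  ∀ r : P.R, A.act (P.lhsPerm r) ((P.lhsTree r).eval A.toPlain ι)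
    = A.act (P.rhsPerm r) ((P.rhsTree r).eval A.toPlain ι)

/-- `A` is presented by `P` (via the interpretation `ι` of generators): `A` satisfies the
relations, and it is universal with that property; this is the universal property of the
coequaliser `F(R) ⇉ F(J) → A` in the category of symmetric operads. -/
def SymmetricOperad.IsPresentedBy (A : SymmetricOperad.{u}) {J : Type u} {ar : J → ℕ}
    (ι : ∀ x : J, A.ops (ar x)) (P : SymmPresentation J ar) : Prop :=
  A.Satisfies ι P ∧
    ∀ (B : SymmetricOperad.{u}) (κ : ∀ x : J, B.ops (ar x)), B.Satisfies κ P →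
      ∃! h : A.Hom B, ∀ x : J, h.app _ (ι x) = κ x

/-- `A` is the free symmetric operad on the collection `(J, ar)`, via `ι`. -/
def SymmetricOperad.IsFreeOn (A : SymmetricOperad.{u}) {J : Type u} {ar : J → ℕ}
    (ι : ∀ x : J, A.ops (ar x)) : Prop :=
  ∀ (B : SymmetricOperad.{u}) (κ : ∀ x : J, B.ops (ar x)),
    ∃! h : A.Hom B, ∀ x : J, h.app _ (ι x) = κ x

/-- `P` is the free plain operad on the collection `(J, ar)`, via `ι`. -/
def PlainOperad.IsFreeOn (P : PlainOperad.{u}) {J : Type u} {ar : J → ℕ}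
    (ι : ∀ x : J, P.ops (ar x)) : Prop :=
  ∀ (Q : PlainOperad.{u}) (κ : ∀ x : J, Q.ops (ar x)),
    ∃! h : P.Hom Q, ∀ x : J, h.app _ (ι x) = κ x

/-- An algebra for a symmetric operad on a set `X`. -/
structure SymmetricOperad.Algebra (A : SymmetricOperad.{u}) (X : Type u) : Type u where
  run : ∀ n, A.ops n → (Fin n → X) → X
  run_unit : ∀ x : X, run 1 A.unit (fun _ => x) = x
  run_comp : ∀ {m : ℕ} (ρ : A.ops m) (k : Fin m → ℕ) (f : ∀ i, A.ops (k i))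
      (xs : Fin (∑ i, k i) → X),
      run _ (A.comp ρ k f) xs
        = run m ρ fun i => run (k i) (f i) fun j => xs (finSigma k ⟨i, j⟩)
  run_act : ∀ {n : ℕ} (t : Equiv.Perm (Fin n)) (ρ : A.ops n) (xs : Fin n → X),
      run n (A.act t ρ) xs = run n ρ fun i => xs (t.symm i)

/-- An algebra for a plain operad on a set `X`. -/
structure PlainOperad.Algebra (P : PlainOperad.{u}) (X : Type u) : Type u where
  run : ∀ n, P.ops n → (Fin n → X) → X
  run_unit : ∀ x : X, run 1 P.unit (fun _ => x) = x
  run_comp : ∀ {m : ℕ} (ρ : P.ops m) (k : Fin m → ℕ) (f : ∀ i, P.ops (k i))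
      (xs : Fin (∑ i, k i) → X),
      run _ (P.comp ρ k f) xs
        = run m ρ fun i => run (k i) (f i) fun j => xs (finSigma k ⟨i, j⟩)

/-- The underlying object of the monad on `Set` associated to a symmetric operad:
`A(X) = Σ_{n≥0} Xⁿ ×_{Sₙ} A[n]`. -/
def SymmetricOperad.MonadObj (A : SymmetricOperad.{u}) (X : Type u) : Type u :=
  Σ n : ℕ, Quot (fun p q : A.ops n × (Fin n → X) =>
    ∃ t : Equiv.Perm (Fin n), q.1 = A.act t p.1 ∧ q.2 = fun i => p.2 (t.symm i))

/-- The generators of the Eckmann–Hilton presentation: two nullary operations `i, i'`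
and two binary operations `b, b'`. -/
inductive EHGen : Type u
  | i | i' | b | b'

/-- Arities of the Eckmann–Hilton generators. -/
def EHar : EHGen.{u} → ℕ
  | .i => 0
  | .i' => 0
  | .b => 2
  | .b' => 2

/-- The relations of the Eckmann–Hilton presentation. -/
inductive EHRel : Type u
  | unitR | unitL | unitR' | unitL' | inter

open FreePlain in
/-- The Eckmann–Hilton presentation: `b ∘ (id, i) = id`, `b ∘ (i, id) = id`,
`b′ ∘ (id, i′) = id`, `b′ ∘ (i′, id) = id`, and
`b ∘ (b′, b′) = (2 3) · (b′ ∘ (b, b))`. -/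
noncomputable def EHPres : SymmPresentation EHGen.{u} EHar where
  R := EHRel
  relN := fun r => match r with
    | .unitR => 1 | .unitL => 1 | .unitR' => 1 | .unitL' => 1 | .inter => 4
  lhsPerm := fun _ => 1
  lhsTree := fun r => match r with
    | .unitR => of2 EHGen.b rfl leaf (of0 EHGen.i rfl)
    | .unitL => of2 EHGen.b rfl (of0 EHGen.i rfl) leaf
    | .unitR' => of2 EHGen.b' rfl leaf (of0 EHGen.i' rfl)
    | .unitL' => of2 EHGen.b' rfl (of0 EHGen.i' rfl) leaf
    | .inter => of2 EHGen.b rfl (of2 EHGen.b' rfl leaf leaf) (of2 EHGen.b' rfl leaf leaf)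
  rhsPerm := fun r => match r with
    | .unitR => 1 | .unitL => 1 | .unitR' => 1 | .unitL' => 1
    | .inter => Equiv.swap (1 : Fin 4) 2
  rhsTree := fun r => match r with
    | .unitR => leaf
    | .unitL => leaf
    | .unitR' => leaf
    | .unitL' => leaf
    | .inter => of2 EHGen.b' rfl (of2 EHGen.b rfl leaf leaf) (of2 EHGen.b rfl leaf leaf)

/-! ### Auxiliary machinery -/

namespace EHAux

open Finset

/-- Explicit value of the standard concatenation-order equivalence. -/
def finSigmaVal {m : ℕ} (k : Fin m → ℕ) (p : Σ i, Fin (k i)) : ℕ :=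
  (∑ i' ∈ Finset.univ.filter (· < p.1), k i') + p.2.val

lemma finSigmaVal_lt {m : ℕ} (k : Fin m → ℕ) (p : Σ i, Fin (k i)) :
    finSigmaVal k p < ∑ i, k i := by
  obtain ⟨i, j⟩ := p
  calc finSigmaVal k ⟨i,j⟩ < (∑ i' ∈ Finset.univ.filter (· < i), k i') + k i := by
        unfold finSigmaVal; exact Nat.add_lt_add_left j.2 _
    _ = ∑ i' ∈ insert i (Finset.univ.filter (· < i)), k i' := by
        rw [Finset.sum_insert (by simp)]; ring
    _ ≤ ∑ i', k i' := Finset.sum_le_sum_of_subset (by simp)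

lemma finSigmaVal_strictMono {m : ℕ} (k : Fin m → ℕ) {p q : Σₗ i, Fin (k i)}
    (h : p < q) : finSigmaVal k (ofLex p) < finSigmaVal k (ofLex q) := by
  obtain ⟨i, j⟩ := p; obtain ⟨i', j'⟩ := q
  obtain h1 | ⟨h0, h2⟩ := Sigma.Lex.lt_def.mp h
  · simp only [] at h1
    calc finSigmaVal k ⟨i,j⟩ < (∑ i' ∈ Finset.univ.filter (· < i), k i') + k i := by
          unfold finSigmaVal; exact Nat.add_lt_add_left j.2 _
      _ = ∑ i'' ∈ insert i (Finset.univ.filter (· < i)), k i'' := by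
          rw [Finset.sum_insert (by simp)]; ring
      _ ≤ ∑ i'' ∈ Finset.univ.filter (· < i'), k i'' := by
          apply Finset.sum_le_sum_of_subset
          intro x hx; simp at hx ⊢
          rcases hx with rfl | hx
          · exact h1
          · exact hx.trans h1
      _ ≤ finSigmaVal k ⟨i', j'⟩ := Nat.le_add_right _ _
  · simp only [] at h0
    subst h0
    simp at h2
    unfold finSigmaVal
    exact Nat.add_lt_add_left h2 _

noncomputable def finSigmaIso {m : ℕ} (k : Fin m → ℕ) :
    (Σₗ i, Fin (k i)) ≃o Fin (∑ i, k i) := by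
  apply StrictMono.orderIsoOfSurjective
    (f := fun p => (⟨finSigmaVal k (ofLex p), finSigmaVal_lt k (ofLex p)⟩ : Fin (∑ i, k i)))
  · intro p q h
    exact finSigmaVal_strictMono k h
  · have hinj : Function.Injective
        (fun p : Σₗ i, Fin (k i) => (⟨finSigmaVal k (ofLex p), finSigmaVal_lt k (ofLex p)⟩ : Fin (∑ i, k i))) := by
      intro p q h
      rcases lt_trichotomy p q with h' | h' | h'
      · exact absurd (congrArg Fin.val h) (Nat.ne_of_lt (finSigmaVal_strictMono k h'))
      · exact h'
      · exact absurd (congrArg Fin.val h).symm (Nat.ne_of_lt (finSigmaVal_strictMono k h'))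
    letI : Fintype (Σₗ i, Fin (k i)) := inferInstanceAs (Fintype (Σ i, Fin (k i)))
    have hc : Fintype.card (Σₗ i, Fin (k i)) = Fintype.card (Fin (∑ i, k i)) := by exact (Fintype.card_sigma (α := fun i => Fin (k i))).trans (by simp)
    exact (Fintype.bijective_iff_injective_and_card _).mpr ⟨hinj, hc⟩ |>.2

lemma finSigma_apply {m : ℕ} (k : Fin m → ℕ) (p : Σ i, Fin (k i)) :
    (finSigma k p : ℕ) = finSigmaVal k p := by
  letI : Fintype (Σₗ i, Fin (k i)) := inferInstanceAs (Fintype (Σ i, Fin (k i)))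
  have : (Fintype.orderIsoFinOfCardEq (Σₗ i, Fin (k i)) (by exact (Fintype.card_sigma (α := fun i => Fin (k i))).trans (by simp))).symm = finSigmaIso k :=
    Subsingleton.elim _ _
  show ((Fintype.orderIsoFinOfCardEq (Σₗ i, Fin (k i)) (by exact (Fintype.card_sigma (α := fun i => Fin (k i))).trans (by simp))).symm.toEquiv (toLex p) : ℕ)
    = finSigmaVal k p
  rw [this]
  rfl

/-- Sum over `Fin 2` of a pair. -/
lemma sum2 (p q : ℕ) : ∑ i, ![p, q] i = p + q := by
  simp [Fin.sum_univ_two]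

/-- Left inclusion `Fin p → Fin (p + q)`. -/
noncomputable def finl (p q : ℕ) (j : Fin p) : Fin (p + q) :=
  Fin.cast (sum2 p q) (finSigma ![p, q] ⟨0, j⟩)

/-- Right inclusion `Fin q → Fin (p + q)`. -/
noncomputable def finr (p q : ℕ) (j : Fin q) : Fin (p + q) :=
  Fin.cast (sum2 p q) (finSigma ![p, q] ⟨1, j⟩)

lemma finl_val (p q : ℕ) (j : Fin p) : (finl p q j : ℕ) = j := by
  unfold finl
  rw [Fin.coe_cast, finSigma_apply]
  unfold finSigmaVal
  have : Finset.univ.filter (· < (0 : Fin 2)) = ∅ := by decide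
  simp [this]

lemma finr_val (p q : ℕ) (j : Fin q) : (finr p q j : ℕ) = p + j := by
  unfold finr
  rw [Fin.coe_cast, finSigma_apply]
  unfold finSigmaVal
  have : Finset.univ.filter (· < (1 : Fin 2)) = {0} := by decide
  rw [this, Finset.sum_singleton]
  rfl

lemma sum_split (p q : ℕ) (k : Fin (p + q) → ℕ) :
    (∑ j, k (finl p q j)) + ∑ j, k (finr p q j) = ∑ i, k i := by
  have h1 : ∑ i, k i
      = ∑ s : Σ i, Fin (![p,q] i), k (Fin.cast (sum2 p q) (finSigma ![p,q] s)) :=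
    (Fintype.sum_equiv ((finSigma ![p,q]).trans (finCongr (sum2 p q))) _ _ fun s => rfl).symm
  rw [h1, ← Finset.univ_sigma_univ, Finset.sum_sigma, Fin.sum_univ_two]
  rfl

end EHAux
namespace EHAux

variable {B : SymmetricOperad.{u}}

/-- Cast an operation along an arity equality. -/
def oc {m n : ℕ} (h : m = n) (ρ : B.ops m) : B.ops n := h ▸ ρ

lemma oc_heq {m n : ℕ} (h : m = n) (ρ : B.ops m) : HEq (oc (B := B) h ρ) ρ := by
  subst h; rfl

lemma heq_e {m n : ℕ} (h : m = n) {ρ : B.ops m} {ρ' : B.ops n}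
    (hh : HEq ρ ρ') : oc (B := B) h ρ = ρ' := by
  subst h; exact eq_of_heq hh

lemma comp_congr {m : ℕ} (ρ : B.ops m) {k k' : Fin m → ℕ}
    (hk : ∀ i, k i = k' i) {f : ∀ i, B.ops (k i)} {f' : ∀ i, B.ops (k' i)}
    (hf : ∀ i, HEq (f i) (f' i)) : HEq (B.comp ρ k f) (B.comp ρ k' f') := by
  have hk' : k = k' := funext hk
  subst hk'
  have : f = f' := funext fun i => eq_of_heq (hf i)
  subst this
  rfl

lemma act_congr {m n : ℕ} (h : m = n) {t : Equiv.Perm (Fin m)} {t' : Equiv.Perm (Fin n)}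
    (ht : HEq t t') {ρ : B.ops m} {ρ' : B.ops n} (hρ : HEq ρ ρ') :
    HEq (B.act t ρ) (B.act t' ρ') := by
  subst h
  rw [eq_of_heq ht, eq_of_heq hρ]

lemma comp_fst_congr {m m' : ℕ} (h : m = m') {ρ : B.ops m} {ρ' : B.ops m'}
    (hρ : HEq ρ ρ') (k : Fin m' → ℕ) (f : ∀ i, B.ops (k i)) :
    HEq (B.comp ρ (fun i => k (Fin.cast h i)) (fun i => f (Fin.cast h i))) (B.comp ρ' k f) := by
  subst h
  rw [eq_of_heq hρ]
  exact HEq.rfl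

/-- Binary composition with re-indexed arity. -/
noncomputable def op2 (B : SymmetricOperad.{u}) (ρ : B.ops 2) {p q : ℕ}
    (x : B.ops p) (y : B.ops q) : B.ops (p + q) :=
  oc (sum2 p q) (B.comp ρ ![p, q] (FreePlain.pairFun x y))

lemma op2_heq (ρ : B.ops 2) {p q : ℕ} (x : B.ops p) (y : B.ops q) :
    HEq (op2 B ρ x y) (B.comp ρ ![p, q] (FreePlain.pairFun x y)) :=
  oc_heq _ _

lemma op2_congr (ρ : B.ops 2) {p p' q q' : ℕ} (hp : p = p') (hq : q = q')
    {x : B.ops p} {x' : B.ops p'} {y : B.ops q} {y' : B.ops q'}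
    (hx : HEq x x') (hy : HEq y y') : HEq (op2 B ρ x y) (op2 B ρ x' y') := by
  subst hp; subst hq
  rw [eq_of_heq hx, eq_of_heq hy]

/-- Composing a nullary operation with the empty family gives it back. -/
lemma comp_empty (ρ : B.ops 0) (k : Fin 0 → ℕ) (f : ∀ i, B.ops (k i)) :
    HEq (B.comp ρ k f) ρ := by
  refine HEq.trans ?_ (B.comp_unit (m := 0) ρ)
  exact comp_congr ρ (fun i => i.elim0) (fun i => i.elim0)

/-- Composing the unit on a singleton family. -/
lemma comp_unit_left (k : Fin 1 → ℕ) (f : ∀ i, B.ops (k i)) :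
    HEq (B.comp B.unit k f) (f 0) := by
  refine HEq.trans ?_ (B.unit_comp (f 0))
  refine comp_congr _ (fun i => ?_) (fun i => ?_)
  · rw [Subsingleton.elim i 0]
  · rw [Subsingleton.elim i 0]

/-- Composition of a binary operation expressed via `op2`. -/
lemma comp_two (ρ : B.ops 2) (k : Fin 2 → ℕ) (f : ∀ i, B.ops (k i)) :
    HEq (B.comp ρ k f) (op2 B ρ (f 0) (f 1)) := by
  refine HEq.trans ?_ (op2_heq ρ (f 0) (f 1)).symm
  refine comp_congr _ (fun i => ?_) (fun i => ?_)
  · match i with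
    | ⟨0, _⟩ => rfl
    | ⟨1, _⟩ => rfl
  · match i with
    | ⟨0, _⟩ => rfl
    | ⟨1, _⟩ => rfl

/-- `op2` applied to two units is the identity modifier. -/
lemma op2_unit_unit (ρ : B.ops 2) : op2 B ρ B.unit B.unit = ρ := by
  refine eq_of_heq (HEq.trans (op2_heq ρ B.unit B.unit) ?_)
  refine HEq.trans ?_ (B.comp_unit ρ)
  refine comp_congr _ (fun i => ?_) (fun i => ?_)
  · match i with
    | ⟨0, _⟩ => rfl
    | ⟨1, _⟩ => rfl
  · match i with
    | ⟨0, _⟩ => rfl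
    | ⟨1, _⟩ => rfl

/-- The workhorse: composing an `op2` with a family splits as an `op2` of compositions. -/
lemma comp_op2 (ρ : B.ops 2) {p q : ℕ} (x : B.ops p) (y : B.ops q)
    (k : Fin (p + q) → ℕ) (f : ∀ i, B.ops (k i)) :
    HEq (B.comp (op2 B ρ x y) k f)
        (op2 B ρ (B.comp x (fun j => k (finl p q j)) (fun j => f (finl p q j)))
                 (B.comp y (fun j => k (finr p q j)) (fun j => f (finr p q j)))) := by
  let l : (Σ i : Fin 2, Fin (![p,q] i)) → ℕ :=
    fun s => k (Fin.cast (sum2 p q) (finSigma ![p,q] s))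
  let g : ∀ s, B.ops (l s) :=
    fun s => f (Fin.cast (sum2 p q) (finSigma ![p,q] s))
  let X : B.ops (∑ j, k (finl p q j)) := B.comp x (fun j => k (finl p q j)) (fun j => f (finl p q j))
  let Y : B.ops (∑ j, k (finr p q j)) := B.comp y (fun j => k (finr p q j)) (fun j => f (finr p q j))
  have A1 := B.comp_assoc ρ ![p,q] (FreePlain.pairFun x y) l g
  have A2a : HEq (B.comp (B.comp ρ ![p,q] (FreePlain.pairFun x y))
        (fun j => k (Fin.cast (sum2 p q) j)) (fun j => f (Fin.cast (sum2 p q) j)))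
      (B.comp (op2 B ρ x y) k f) :=
    comp_fst_congr (sum2 p q) (op2_heq ρ x y).symm k f
  have A2b : HEq (B.comp (B.comp ρ ![p,q] (FreePlain.pairFun x y))
        (fun j => k (Fin.cast (sum2 p q) j)) (fun j => f (Fin.cast (sum2 p q) j)))
      (B.comp (B.comp ρ ![p,q] (FreePlain.pairFun x y))
        (fun j => l ((finSigma ![p,q]).symm j)) (fun j => g ((finSigma ![p,q]).symm j))) := by
    refine comp_congr _ (fun j => ?_) (fun j => ?_)
    · show k (Fin.cast (sum2 p q) j) = k (Fin.cast (sum2 p q) (finSigma ![p,q] ((finSigma ![p,q]).symm j)))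
      rw [Equiv.apply_symm_apply]
    · show HEq (f (Fin.cast (sum2 p q) j))
        (f (Fin.cast (sum2 p q) (finSigma ![p,q] ((finSigma ![p,q]).symm j))))
      exact congr_arg_heq _ (by rw [Equiv.apply_symm_apply])
  have A3 : HEq (B.comp ρ (fun i => ∑ j : Fin (![p,q] i), l ⟨i, j⟩)
        (fun i => B.comp (FreePlain.pairFun (α := fun i => B.ops (![p,q] i)) x y i) (fun j => l ⟨i, j⟩) (fun j => g ⟨i, j⟩)))
      (B.comp ρ ![∑ j, k (finl p q j), ∑ j, k (finr p q j)] (FreePlain.pairFun X Y)) := by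
    refine comp_congr _ (fun i => ?_) (fun i => ?_)
    · match i with
      | ⟨0, _⟩ => rfl
      | ⟨1, _⟩ => rfl
    · match i with
      | ⟨0, _⟩ => exact HEq.rfl
      | ⟨1, _⟩ => exact HEq.rfl
  exact (A2a.symm.trans A2b).trans (A1.trans (A3.trans (op2_heq ρ X Y).symm))

end EHAux
namespace EHAux

variable {B : SymmetricOperad.{u}}

lemma perm_eq_one_of_zero {N : ℕ} (h : N = 0) (t : Equiv.Perm (Fin N)) : t = 1 := by
  subst h
  exact Equiv.ext fun x => x.elim0

lemma act_of_zero {N : ℕ} (h : N = 0) (t : Equiv.Perm (Fin N)) (ρ : B.ops N) :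
    B.act t ρ = ρ := by
  rw [perm_eq_one_of_zero h t, B.act_one]

lemma swap_heq {m n : ℕ} (h : m = n) {x y : Fin m} {x' y' : Fin n}
    (hx : (x : ℕ) = x') (hy : (y : ℕ) = y') :
    HEq (Equiv.swap x y) (Equiv.swap x' y') := by
  subst h
  rw [Fin.ext hx, Fin.ext hy]

lemma perm_fin_two (t : Equiv.Perm (Fin 2)) (h : t 0 = 1) : t = Equiv.swap 0 1 := by
  have h1 : t 1 = 0 := by
    have := t.injective.ne (a₁ := (0 : Fin 2)) (a₂ := 1) (by decide)
    rw [h] at this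
    omega
  refine Equiv.ext fun x => ?_
  match x with
  | ⟨0, _⟩ => rw [show (⟨0, by omega⟩ : Fin 2) = 0 from rfl, h]; rfl
  | ⟨1, _⟩ => rw [show (⟨1, by omega⟩ : Fin 2) = 1 from rfl, h1]; rfl

lemma perm_heq_swap01 {N : ℕ} (t : Equiv.Perm (Fin N)) (h : N = 2) (x0 : Fin N)
    (h0 : (x0 : ℕ) = 0) (h1 : (t x0 : ℕ) = 1) :
    HEq t (Equiv.swap (0 : Fin 2) 1) := by
  subst h
  have : x0 = 0 := Fin.ext h0
  subst this
  exact heq_of_eq (perm_fin_two t (Fin.ext h1))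

lemma blockPerm_apply {m : ℕ} (k : Fin m → ℕ) (t : Equiv.Perm (Fin m))
    (s : Σ i, Fin (k (t i))) :
    blockPerm k t (Fin.cast (Equiv.sum_comp t k) (finSigma (fun i => k (t i)) s))
      = finSigma k ⟨t s.1, s.2⟩ := by
  show ((finCongr (Equiv.sum_comp t k)).symm.trans
      ((finSigma fun i => k (t i)).symm.trans
        ((Equiv.sigmaCongrLeft (β := fun i => Fin (k i)) t).trans (finSigma k))))
      (Fin.cast (Equiv.sum_comp t k) (finSigma (fun i => k (t i)) s)) = _
  rw [Equiv.trans_apply, Equiv.trans_apply, Equiv.trans_apply]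
  have h1 : (finCongr (Equiv.sum_comp t k)).symm
      (Fin.cast (Equiv.sum_comp t k) (finSigma (fun i => k (t i)) s))
      = finSigma (fun i => k (t i)) s := by
    apply Fin.ext; simp
  rw [h1, Equiv.symm_apply_apply]
  obtain ⟨i, j⟩ := s
  rw [Equiv.sigmaCongrLeft_apply]

lemma blockSumPerm_apply {m : ℕ} (k : Fin m → ℕ) (t : ∀ i, Equiv.Perm (Fin (k i)))
    (s : Σ i, Fin (k i)) :
    blockSumPerm k t (finSigma k s) = finSigma k ⟨s.1, t s.1 s.2⟩ := by
  show (((finSigma k).symm.trans (Equiv.sigmaCongrRight t)).trans (finSigma k))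
      (finSigma k s) = _
  rw [Equiv.trans_apply, Equiv.trans_apply, Equiv.symm_apply_apply]
  rfl

lemma blockPerm_eq_one {m : ℕ} (k : Fin m → ℕ) (t : Equiv.Perm (Fin m))
    (H : ∀ s : Σ i, Fin (k (t i)),
      finSigmaVal k ⟨t s.1, s.2⟩ = finSigmaVal (fun i => k (t i)) s) :
    blockPerm k t = 1 := by
  refine Equiv.ext fun x => ?_
  obtain ⟨z, rfl⟩ : ∃ z, (Fin.cast (Equiv.sum_comp t k)).comp (finSigma (fun i => k (t i))) z = x := by
    refine ⟨(finSigma (fun i => k (t i))).symm ((finCongr (Equiv.sum_comp t k)).symm x), ?_⟩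
    show Fin.cast (Equiv.sum_comp t k) (finSigma (fun i => k (t i))
      ((finSigma (fun i => k (t i))).symm ((finCongr (Equiv.sum_comp t k)).symm x))) = x
    rw [Equiv.apply_symm_apply]
    apply Fin.ext
    simp
  show blockPerm k t (Fin.cast (Equiv.sum_comp t k) (finSigma (fun i => k (t i)) z)) = _
  rw [blockPerm_apply]
  apply Fin.ext
  rw [finSigma_apply]
  show _ = ((Fin.cast (Equiv.sum_comp t k) (finSigma (fun i => k (t i)) z)) : ℕ)
  rw [Fin.coe_cast, finSigma_apply]
  exact H z

end EHAux
namespace EHAux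

variable {B : SymmetricOperad.{u}}

lemma eval_cast {J : Type u} {ar : J → ℕ} (P : PlainOperad.{u}) (ι : ∀ x : J, P.ops (ar x))
    {m n : ℕ} (h : m = n) (t : FreePlain J ar m) :
    HEq ((FreePlain.cast h t).eval P ι) (t.eval P ι) := by
  subst h; rfl

lemma eval_of {J : Type u} {ar : J → ℕ} (P : PlainOperad.{u}) (ι : ∀ x : J, P.ops (ar x))
    (x : J) : (FreePlain.of x).eval P ι = ι x := by
  refine eq_of_heq (HEq.trans (eval_cast P ι _ _) ?_)
  show HEq (P.comp (ι x) (fun _ => 1) fun i => FreePlain.eval P ι FreePlain.leaf) _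
  exact P.comp_unit (ι x)

lemma eval_of0_i (ι : ∀ x : EHGen.{u}, B.ops (EHar x)) :
    (FreePlain.of0 EHGen.i rfl).eval B.toPlain ι = ι EHGen.i := by
  refine eq_of_heq (HEq.trans (eval_cast B.toPlain ι _ _) ?_)
  exact heq_of_eq (eval_of B.toPlain ι EHGen.i)

lemma eval_of0_i' (ι : ∀ x : EHGen.{u}, B.ops (EHar x)) :
    (FreePlain.of0 EHGen.i' rfl).eval B.toPlain ι = ι EHGen.i' := by
  refine eq_of_heq (HEq.trans (eval_cast B.toPlain ι _ _) ?_)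
  exact heq_of_eq (eval_of B.toPlain ι EHGen.i')

lemma eval_of2_b (ι : ∀ x : EHGen.{u}, B.ops (EHar x)) {p q : ℕ}
    (a : FreePlain EHGen.{u} EHar p) (b : FreePlain EHGen.{u} EHar q) :
    (FreePlain.of2 EHGen.b rfl a b).eval B.toPlain ι
      = op2 B (ι EHGen.b) (a.eval B.toPlain ι) (b.eval B.toPlain ι) := by
  refine eq_of_heq (HEq.trans (eval_cast B.toPlain ι _ _) ?_)
  refine HEq.trans ?_ (op2_heq (ι EHGen.b) (a.eval B.toPlain ι) (b.eval B.toPlain ι)).symm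
  show HEq (B.comp (ι EHGen.b) (fun i => ![p,q] i)
      (fun i => FreePlain.eval B.toPlain ι
        (FreePlain.pairFun (α := fun j : Fin 2 => FreePlain EHGen EHar (![p, q] j)) a b i))) _
  refine comp_congr _ (fun i => rfl) (fun i => ?_)
  match i with
  | ⟨0, _⟩ => exact HEq.rfl
  | ⟨1, _⟩ => exact HEq.rfl

lemma eval_of2_b' (ι : ∀ x : EHGen.{u}, B.ops (EHar x)) {p q : ℕ}
    (a : FreePlain EHGen.{u} EHar p) (b : FreePlain EHGen.{u} EHar q) :
    (FreePlain.of2 EHGen.b' rfl a b).eval B.toPlain ι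
      = op2 B (ι EHGen.b') (a.eval B.toPlain ι) (b.eval B.toPlain ι) := by
  refine eq_of_heq (HEq.trans (eval_cast B.toPlain ι _ _) ?_)
  refine HEq.trans ?_ (op2_heq (ι EHGen.b') (a.eval B.toPlain ι) (b.eval B.toPlain ι)).symm
  show HEq (B.comp (ι EHGen.b') (fun i => ![p,q] i)
      (fun i => FreePlain.eval B.toPlain ι
        (FreePlain.pairFun (α := fun j : Fin 2 => FreePlain EHGen EHar (![p, q] j)) a b i))) _
  refine comp_congr _ (fun i => rfl) (fun i => ?_)
  match i with
  | ⟨0, _⟩ => exact HEq.rfl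
  | ⟨1, _⟩ => exact HEq.rfl

end EHAux
namespace EHAux

/-- Dependent 4-tuples over `Fin 4`. -/
def quadFun {α : Fin 4 → Sort*} (a : α 0) (b : α 1) (c : α 2) (d : α 3) : ∀ i, α i
  | ⟨0, _⟩ => a
  | ⟨1, _⟩ => b
  | ⟨2, _⟩ => c
  | ⟨3, _⟩ => d

/-- Dependent triples over `Fin 3`. -/
def tripleFun {α : Fin 3 → Sort*} (a : α 0) (b : α 1) (c : α 2) : ∀ i, α i
  | ⟨0, _⟩ => a
  | ⟨1, _⟩ => b
  | ⟨2, _⟩ => c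

/-- The interchange permutation `(2 3)` of `Fin 4`. -/
noncomputable def σ4 : Equiv.Perm (Fin 4) := Equiv.swap (1 : Fin 4) 2

variable {B : SymmetricOperad.{u}} {κ : ∀ x : EHGen.{u}, B.ops (EHar x)}

lemma comp_two' (ρ : B.ops 2) (k : Fin 2 → ℕ) (f : ∀ i, B.ops (k i)) {p q : ℕ}
    {x : B.ops p} {y : B.ops q} (hp : k 0 = p) (hq : k 1 = q)
    (hx : HEq (f 0) x) (hy : HEq (f 1) y) : HEq (B.comp ρ k f) (op2 B ρ x y) :=
  (comp_two ρ k f).trans (op2_congr ρ hp hq hx hy)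

lemma finl220 : finl 2 2 0 = (0 : Fin 4) := Fin.ext (by rw [finl_val]; rfl)
lemma finl221 : finl 2 2 1 = (1 : Fin 4) := Fin.ext (by rw [finl_val]; rfl)
lemma finr220 : finr 2 2 0 = (2 : Fin 4) := Fin.ext (by rw [finr_val]; rfl)
lemma finr221 : finr 2 2 1 = (3 : Fin 4) := Fin.ext (by rw [finr_val]; rfl)

lemma σ40 : σ4 (finl 2 2 0) = 0 := by rw [finl220]; decide
lemma σ41 : σ4 (finl 2 2 1) = 2 := by rw [finl221]; decide
lemma σ42 : σ4 (finr 2 2 0) = 1 := by rw [finr220]; decide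
lemma σ43 : σ4 (finr 2 2 1) = 3 := by rw [finr221]; decide


section rels

variable (hS : B.Satisfies κ EHPres)
include hS

lemma rel_uR : op2 B (κ EHGen.b) B.unit (κ EHGen.i) = B.unit := by
  have h := hS EHRel.unitR
  erw [show EHPres.lhsPerm EHRel.unitR.{u} = 1 from rfl, show EHPres.rhsPerm EHRel.unitR.{u} = 1 from rfl,
    B.act_one, B.act_one] at h
  rw [show EHPres.lhsTree EHRel.unitR
    = FreePlain.of2 EHGen.b rfl FreePlain.leaf (FreePlain.of0 EHGen.i rfl) from rfl,
    show EHPres.rhsTree EHRel.unitR = FreePlain.leaf from rfl] at h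
  erw [eval_of2_b, eval_of0_i] at h
  exact h

lemma rel_uL : op2 B (κ EHGen.b) (κ EHGen.i) B.unit = B.unit := by
  have h := hS EHRel.unitL
  erw [show EHPres.lhsPerm EHRel.unitL.{u} = 1 from rfl, show EHPres.rhsPerm EHRel.unitL.{u} = 1 from rfl,
    B.act_one, B.act_one] at h
  rw [show EHPres.lhsTree EHRel.unitL
    = FreePlain.of2 EHGen.b rfl (FreePlain.of0 EHGen.i rfl) FreePlain.leaf from rfl,
    show EHPres.rhsTree EHRel.unitL = FreePlain.leaf from rfl] at h
  erw [eval_of2_b, eval_of0_i] at h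
  exact h

lemma rel_uR' : op2 B (κ EHGen.b') B.unit (κ EHGen.i') = B.unit := by
  have h := hS EHRel.unitR'
  erw [show EHPres.lhsPerm EHRel.unitR'.{u} = 1 from rfl, show EHPres.rhsPerm EHRel.unitR'.{u} = 1 from rfl,
    B.act_one, B.act_one] at h
  rw [show EHPres.lhsTree EHRel.unitR'
    = FreePlain.of2 EHGen.b' rfl FreePlain.leaf (FreePlain.of0 EHGen.i' rfl) from rfl,
    show EHPres.rhsTree EHRel.unitR' = FreePlain.leaf from rfl] at h
  erw [eval_of2_b', eval_of0_i'] at h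
  exact h

lemma rel_uL' : op2 B (κ EHGen.b') (κ EHGen.i') B.unit = B.unit := by
  have h := hS EHRel.unitL'
  erw [show EHPres.lhsPerm EHRel.unitL'.{u} = 1 from rfl, show EHPres.rhsPerm EHRel.unitL'.{u} = 1 from rfl,
    B.act_one, B.act_one] at h
  rw [show EHPres.lhsTree EHRel.unitL'
    = FreePlain.of2 EHGen.b' rfl (FreePlain.of0 EHGen.i' rfl) FreePlain.leaf from rfl,
    show EHPres.rhsTree EHRel.unitL' = FreePlain.leaf from rfl] at h
  erw [eval_of2_b', eval_of0_i'] at h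
  exact h

lemma rel_inter : op2 B (κ EHGen.b) (κ EHGen.b') (κ EHGen.b')
    = B.act σ4 (op2 B (κ EHGen.b') (κ EHGen.b) (κ EHGen.b)) := by
  have h := hS EHRel.inter
  erw [show EHPres.lhsPerm EHRel.inter.{u} = 1 from rfl, B.act_one] at h
  rw [show EHPres.rhsPerm EHRel.inter = Equiv.swap (1 : Fin 4) 2 from rfl] at h
  rw [show EHPres.lhsTree EHRel.inter
    = FreePlain.of2 EHGen.b rfl (FreePlain.of2 EHGen.b' rfl FreePlain.leaf FreePlain.leaf)
        (FreePlain.of2 EHGen.b' rfl FreePlain.leaf FreePlain.leaf) from rfl] at h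
  rw [show EHPres.rhsTree EHRel.inter
    = FreePlain.of2 EHGen.b' rfl (FreePlain.of2 EHGen.b rfl FreePlain.leaf FreePlain.leaf)
        (FreePlain.of2 EHGen.b rfl FreePlain.leaf FreePlain.leaf) from rfl] at h
  erw [eval_of2_b, eval_of2_b', eval_of2_b', eval_of2_b] at h
  show _ = B.act σ4 _
  rw [show (FreePlain.leaf.eval B.toPlain κ) = B.unit from rfl] at h
  erw [op2_unit_unit, op2_unit_unit] at h
  exact h

/-- Generalised right unit law for `b`. -/
lemma etaR {p : ℕ} (x : B.ops p) : HEq (op2 B (κ EHGen.b) x (κ EHGen.i)) x := by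
  have h1 : HEq (B.comp (op2 B (κ EHGen.b) B.unit (κ EHGen.i))
      (fun _ : Fin (1 + 0) => p) (fun _ => x)) x := by
    rw [rel_uR hS]
    exact comp_unit_left _ _
  have h2 := comp_op2 (κ EHGen.b) B.unit (κ EHGen.i) (fun _ : Fin (1 + 0) => p) (fun _ => x)
  refine HEq.trans (HEq.trans ?_ h2.symm) h1
  refine op2_congr _ rfl (show (∑ _j : Fin 0, p) = 0 by simp) ?_ ?_
  · exact (comp_unit_left (fun _ => p) (fun _ => x)).symm
  · exact (comp_empty _ _ _).symm

/-- Generalised left unit law for `b`. -/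
lemma etaL {p : ℕ} (x : B.ops p) : HEq (op2 B (κ EHGen.b) (κ EHGen.i) x) x := by
  have h1 : HEq (B.comp (op2 B (κ EHGen.b) (κ EHGen.i) B.unit)
      (fun _ : Fin (0 + 1) => p) (fun _ => x)) x := by
    rw [rel_uL hS]
    exact comp_unit_left _ _
  have h2 := comp_op2 (κ EHGen.b) (κ EHGen.i) B.unit (fun _ : Fin (0 + 1) => p) (fun _ => x)
  refine HEq.trans (HEq.trans ?_ h2.symm) h1
  refine op2_congr _ (show (∑ _j : Fin 0, p) = 0 by simp) rfl ?_ ?_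
  · exact (comp_empty _ _ _).symm
  · exact (comp_unit_left (fun _ => p) (fun _ => x)).symm

lemma etaR' {p : ℕ} (x : B.ops p) : HEq (op2 B (κ EHGen.b') x (κ EHGen.i')) x := by
  have h1 : HEq (B.comp (op2 B (κ EHGen.b') B.unit (κ EHGen.i'))
      (fun _ : Fin (1 + 0) => p) (fun _ => x)) x := by
    rw [rel_uR' hS]
    exact comp_unit_left _ _
  have h2 := comp_op2 (κ EHGen.b') B.unit (κ EHGen.i') (fun _ : Fin (1 + 0) => p) (fun _ => x)
  refine HEq.trans (HEq.trans ?_ h2.symm) h1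
  refine op2_congr _ rfl (show (∑ _j : Fin 0, p) = 0 by simp) ?_ ?_
  · exact (comp_unit_left (fun _ => p) (fun _ => x)).symm
  · exact (comp_empty _ _ _).symm

lemma etaL' {p : ℕ} (x : B.ops p) : HEq (op2 B (κ EHGen.b') (κ EHGen.i') x) x := by
  have h1 : HEq (B.comp (op2 B (κ EHGen.b') (κ EHGen.i') B.unit)
      (fun _ : Fin (0 + 1) => p) (fun _ => x)) x := by
    rw [rel_uL' hS]
    exact comp_unit_left _ _
  have h2 := comp_op2 (κ EHGen.b') (κ EHGen.i') B.unit (fun _ : Fin (0 + 1) => p) (fun _ => x)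
  refine HEq.trans (HEq.trans ?_ h2.symm) h1
  refine op2_congr _ (show (∑ _j : Fin 0, p) = 0 by simp) rfl ?_ ?_
  · exact (comp_empty _ _ _).symm
  · exact (comp_unit_left (fun _ => p) (fun _ => x)).symm

/-- Plugging a 4-tuple into the two sides of the interchange relation. -/
lemma plug_inter (k : Fin 4 → ℕ) (f : ∀ i, B.ops (k i)) :
    ∃ Z : B.ops (∑ i, k i),
      HEq Z (op2 B (κ EHGen.b') (op2 B (κ EHGen.b) (f 0) (f 1))
              (op2 B (κ EHGen.b) (f 2) (f 3))) ∧
      HEq (op2 B (κ EHGen.b) (op2 B (κ EHGen.b') (f 0) (f 2))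
              (op2 B (κ EHGen.b') (f 1) (f 3)))
          (B.act (blockPerm k σ4) Z) := by
  refine ⟨B.comp (op2 B (κ EHGen.b') (κ EHGen.b) (κ EHGen.b)) k f, ?_, ?_⟩
  · refine HEq.trans (comp_op2 (p := 2) (q := 2) _ _ _ k f) ?_
    refine op2_congr _ ?_ ?_ ?_ ?_
    · rw [Fin.sum_univ_two, finl220, finl221]
    · rw [Fin.sum_univ_two, finr220, finr221]
    · exact comp_two' _ _ _ (congrArg k finl220) (congrArg k finl221)
        (congr_arg_heq f finl220) (congr_arg_heq f finl221)
    · exact comp_two' _ _ _ (congrArg k finr220) (congrArg k finr221)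
        (congr_arg_heq f finr220) (congr_arg_heq f finr221)
  · have hax := B.comp_act σ4 (op2 B (κ EHGen.b') (κ EHGen.b) (κ EHGen.b)) k f
    refine HEq.trans ?_ hax
    rw [← rel_inter hS]
    refine (HEq.trans (comp_op2 (p := 2) (q := 2) _ _ _
      (fun i => k (σ4 i)) (fun i => f (σ4 i))) (op2_congr _ ?_ ?_ ?_ ?_)).symm
    · rw [Fin.sum_univ_two, σ40, σ41]
    · rw [Fin.sum_univ_two, σ42, σ43]
    · exact comp_two' _ _ _ (congrArg k σ40) (congrArg k σ41)
        (congr_arg_heq f σ40) (congr_arg_heq f σ41)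
    · exact comp_two' _ _ _ (congrArg k σ42) (congrArg k σ43)
        (congr_arg_heq f σ42) (congr_arg_heq f σ43)

end rels

end EHAux
namespace EHAux

variable {B : SymmetricOperad.{u}} {κ : ∀ x : EHGen.{u}, B.ops (EHar x)}

section eh

variable (hS : B.Satisfies κ EHPres)
include hS

/-- Eckmann–Hilton: the two units agree. -/
lemma gen_i_eq : κ EHGen.i = κ EHGen.i' := by
  obtain ⟨Z, hZ1, hZ2⟩ := plug_inter (κ := κ) hS (fun _ => 0)
    (quadFun (α := fun _ => B.ops 0) (κ EHGen.i) (κ EHGen.i') (κ EHGen.i') (κ EHGen.i))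
  replace hZ2 : HEq (op2 B (κ EHGen.b) (op2 B (κ EHGen.b') (κ EHGen.i) (κ EHGen.i'))
      (op2 B (κ EHGen.b') (κ EHGen.i') (κ EHGen.i)))
      (B.act (blockPerm (fun _ => 0) σ4) Z) := hZ2
  replace hZ1 : HEq Z (op2 B (κ EHGen.b') (op2 B (κ EHGen.b) (κ EHGen.i) (κ EHGen.i'))
      (op2 B (κ EHGen.b) (κ EHGen.i') (κ EHGen.i))) := hZ1
  rw [eq_of_heq (etaR' hS (κ EHGen.i)), eq_of_heq (etaL' hS (κ EHGen.i)),
    act_of_zero (by simp)] at hZ2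
  erw [eq_of_heq (etaL hS (κ EHGen.i')), eq_of_heq (etaR hS (κ EHGen.i')),
    eq_of_heq (etaR' hS (κ EHGen.i'))] at hZ1
  exact eq_of_heq ((etaR hS (κ EHGen.i)).symm.trans (hZ2.trans hZ1))

/-- Eckmann–Hilton: the two binary operations agree. -/
lemma gen_b_eq : κ EHGen.b = κ EHGen.b' := by
  obtain ⟨Z, hZ1, hZ2⟩ := plug_inter (κ := κ) hS ![1,0,0,1]
    (quadFun (α := fun i => B.ops (![1,0,0,1] i)) B.unit (κ EHGen.i) (κ EHGen.i) B.unit)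
  replace hZ2 : HEq (op2 B (κ EHGen.b) (op2 B (κ EHGen.b') B.unit (κ EHGen.i))
      (op2 B (κ EHGen.b') (κ EHGen.i) B.unit))
      (B.act (blockPerm ![1,0,0,1] σ4) Z) := hZ2
  replace hZ1 : HEq Z (op2 B (κ EHGen.b') (op2 B (κ EHGen.b) B.unit (κ EHGen.i))
      (op2 B (κ EHGen.b) (κ EHGen.i) B.unit)) := hZ1
  have r1 : op2 B (κ EHGen.b') B.unit (κ EHGen.i) = B.unit := by
    rw [gen_i_eq hS]; exact rel_uR' hS
  have r2 : op2 B (κ EHGen.b') (κ EHGen.i) B.unit = B.unit := by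
    rw [gen_i_eq hS]; exact rel_uL' hS
  erw [r1, r2, op2_unit_unit] at hZ2
  erw [rel_uR hS, rel_uL hS, op2_unit_unit] at hZ1
  have hbp : blockPerm ![1,0,0,1] σ4 = 1 := blockPerm_eq_one _ _ (by decide)
  rw [hbp, B.act_one] at hZ2
  exact eq_of_heq (hZ2.trans hZ1)

/-- Eckmann–Hilton: commutativity. -/
lemma gen_b_comm : κ EHGen.b = B.act (Equiv.swap (0 : Fin 2) 1) (κ EHGen.b) := by
  obtain ⟨Z, hZ1, hZ2⟩ := plug_inter (κ := κ) hS ![0,1,1,0]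
    (quadFun (α := fun i => B.ops (![0,1,1,0] i)) (κ EHGen.i) B.unit B.unit (κ EHGen.i))
  replace hZ2 : HEq (op2 B (κ EHGen.b) (op2 B (κ EHGen.b') (κ EHGen.i) B.unit)
      (op2 B (κ EHGen.b') B.unit (κ EHGen.i)))
      (B.act (blockPerm ![0,1,1,0] σ4) Z) := hZ2
  replace hZ1 : HEq Z (op2 B (κ EHGen.b') (op2 B (κ EHGen.b) (κ EHGen.i) B.unit)
      (op2 B (κ EHGen.b) B.unit (κ EHGen.i))) := hZ1
  have r1 : op2 B (κ EHGen.b') B.unit (κ EHGen.i) = B.unit := by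
    rw [gen_i_eq hS]; exact rel_uR' hS
  have r2 : op2 B (κ EHGen.b') (κ EHGen.i) B.unit = B.unit := by
    rw [gen_i_eq hS]; exact rel_uL' hS
  erw [r1, r2, op2_unit_unit] at hZ2
  erw [rel_uL hS, rel_uR hS, op2_unit_unit, ← gen_b_eq hS] at hZ1
  have h2 : (∑ i, ![0,1,1,0] i) = 2 := by decide
  have hx0 : ((Fin.cast (Equiv.sum_comp σ4 ![0,1,1,0])
      (finSigma (fun i => ![0,1,1,0] (σ4 i)) ⟨1, ⟨0, by decide⟩⟩)) : ℕ) = 0 := by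
    rw [Fin.coe_cast, finSigma_apply]; decide
  have hbp1 : ((blockPerm ![0,1,1,0] σ4 (Fin.cast (Equiv.sum_comp σ4 ![0,1,1,0])
      (finSigma (fun i => ![0,1,1,0] (σ4 i)) ⟨1, ⟨0, by decide⟩⟩))) : ℕ) = 1 := by
    rw [blockPerm_apply ![0,1,1,0] σ4 ⟨1, ⟨0, by decide⟩⟩, finSigma_apply]; decide
  have hswap : HEq (blockPerm ![0,1,1,0] σ4) (Equiv.swap (0 : Fin 2) 1) :=
    perm_heq_swap01 _ h2 _ hx0 hbp1
  exact eq_of_heq (hZ2.trans (act_congr h2 hswap hZ1))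

/-- Eckmann–Hilton: associativity seed. -/
lemma gen_b_assoc : op2 B (κ EHGen.b) B.unit (κ EHGen.b)
    = op2 B (κ EHGen.b) (κ EHGen.b) B.unit := by
  obtain ⟨Z, hZ1, hZ2⟩ := plug_inter (κ := κ) hS ![1,1,0,1]
    (quadFun (α := fun i => B.ops (![1,1,0,1] i)) B.unit B.unit (κ EHGen.i) B.unit)
  replace hZ2 : HEq (op2 B (κ EHGen.b) (op2 B (κ EHGen.b') B.unit (κ EHGen.i))
      (op2 B (κ EHGen.b') B.unit B.unit))
      (B.act (blockPerm ![1,1,0,1] σ4) Z) := hZ2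
  replace hZ1 : HEq Z (op2 B (κ EHGen.b') (op2 B (κ EHGen.b) B.unit B.unit)
      (op2 B (κ EHGen.b) (κ EHGen.i) B.unit)) := hZ1
  have r1 : op2 B (κ EHGen.b') B.unit (κ EHGen.i) = B.unit := by
    rw [gen_i_eq hS]; exact rel_uR' hS
  erw [r1, op2_unit_unit, ← gen_b_eq hS] at hZ2
  erw [op2_unit_unit, rel_uL hS, ← gen_b_eq hS] at hZ1
  have hbp : blockPerm ![1,1,0,1] σ4 = 1 := blockPerm_eq_one _ _ (by decide)
  rw [hbp, B.act_one] at hZ2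
  exact eq_of_heq (hZ2.trans hZ1)

end eh

end EHAux
namespace EHAux

variable {B : SymmetricOperad.{u}} {κ : ∀ x : EHGen.{u}, B.ops (EHar x)}

lemma finl210 : finl 2 1 0 = (0 : Fin 3) := Fin.ext (by rw [finl_val]; rfl)
lemma finl211 : finl 2 1 1 = (1 : Fin 3) := Fin.ext (by rw [finl_val]; rfl)
lemma finr210 : finr 2 1 0 = (2 : Fin 3) := Fin.ext (by rw [finr_val]; rfl)
lemma finl120 : finl 1 2 0 = (0 : Fin 3) := Fin.ext (by rw [finl_val]; rfl)
lemma finr120 : finr 1 2 0 = (1 : Fin 3) := Fin.ext (by rw [finr_val]; rfl)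
lemma finr121 : finr 1 2 1 = (2 : Fin 3) := Fin.ext (by rw [finr_val]; rfl)

/-- The canonical family of operations built from the Eckmann–Hilton generators. -/
noncomputable def efam (B : SymmetricOperad.{u}) (κ : ∀ x : EHGen.{u}, B.ops (EHar x)) :
    ∀ n, B.ops n
  | 0 => κ EHGen.i
  | (n + 1) => op2 B (κ EHGen.b) (efam B κ n) B.unit

section eh2

variable (hS : B.Satisfies κ EHPres)
include hS

/-- Full associativity of the binary operation. -/
lemma assoc3 {p q r : ℕ} (x : B.ops p) (y : B.ops q) (z : B.ops r) :
    HEq (op2 B (κ EHGen.b) (op2 B (κ EHGen.b) x y) z)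
        (op2 B (κ EHGen.b) x (op2 B (κ EHGen.b) y z)) := by
  have hL : HEq (B.comp (op2 B (κ EHGen.b) (κ EHGen.b) B.unit) ![p,q,r]
      (tripleFun (α := fun i => B.ops (![p,q,r] i)) x y z))
      (op2 B (κ EHGen.b) (op2 B (κ EHGen.b) x y) z) := by
    refine HEq.trans (comp_op2 (p := 2) (q := 1) _ _ _ ![p,q,r]
      (tripleFun (α := fun i => B.ops (![p,q,r] i)) x y z)) ?_
    refine op2_congr _ ?_ ?_ ?_ ?_
    · rw [Fin.sum_univ_two, finl210, finl211]; rfl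
    · rw [Fin.sum_univ_one, finr210]; rfl
    · exact comp_two' _ _ _ (congrArg ![p,q,r] finl210) (congrArg ![p,q,r] finl211)
        (congr_arg_heq _ finl210) (congr_arg_heq _ finl211)
    · exact (comp_unit_left _ _).trans (congr_arg_heq _ finr210)
  have hR : HEq (B.comp (op2 B (κ EHGen.b) B.unit (κ EHGen.b)) ![p,q,r]
      (tripleFun (α := fun i => B.ops (![p,q,r] i)) x y z))
      (op2 B (κ EHGen.b) x (op2 B (κ EHGen.b) y z)) := by
    refine HEq.trans (comp_op2 (p := 1) (q := 2) _ _ _ ![p,q,r]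
      (tripleFun (α := fun i => B.ops (![p,q,r] i)) x y z)) ?_
    refine op2_congr _ ?_ ?_ ?_ ?_
    · rw [Fin.sum_univ_one, finl120]; rfl
    · rw [Fin.sum_univ_two, finr120, finr121]; rfl
    · exact (comp_unit_left _ _).trans (congr_arg_heq _ finl120)
    · exact comp_two' _ _ _ (congrArg ![p,q,r] finr120) (congrArg ![p,q,r] finr121)
        (congr_arg_heq _ finr120) (congr_arg_heq _ finr121)
  have hmid : B.comp (op2 B (κ EHGen.b) (κ EHGen.b) B.unit) ![p,q,r]
        (tripleFun (α := fun i => B.ops (![p,q,r] i)) x y z)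
      = B.comp (op2 B (κ EHGen.b) B.unit (κ EHGen.b)) ![p,q,r]
        (tripleFun (α := fun i => B.ops (![p,q,r] i)) x y z) :=
    (congrArg (fun w => B.comp w ![p,q,r]
      (tripleFun (α := fun i => B.ops (![p,q,r] i)) x y z)) (gen_b_assoc hS)).symm
  exact hL.symm.trans (hmid ▸ hR)

lemma efam_one : efam B κ 1 = B.unit := rel_uL hS

lemma efam_two : efam B κ 2 = κ EHGen.b := by
  show op2 B (κ EHGen.b) (efam B κ 1) B.unit = κ EHGen.b
  rw [efam_one hS]
  exact op2_unit_unit _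

lemma efam_mul (a b : ℕ) :
    op2 B (κ EHGen.b) (efam B κ a) (efam B κ b) = efam B κ (a + b) := by
  induction b with
  | zero => exact eq_of_heq (etaR hS (efam B κ a))
  | succ b ih =>
    show op2 B (κ EHGen.b) (efam B κ a) (op2 B (κ EHGen.b) (efam B κ b) B.unit) = _
    calc op2 B (κ EHGen.b) (efam B κ a) (op2 B (κ EHGen.b) (efam B κ b) B.unit)
        = op2 B (κ EHGen.b) (op2 B (κ EHGen.b) (efam B κ a) (efam B κ b)) B.unit :=
          (eq_of_heq (assoc3 hS (efam B κ a) (efam B κ b) B.unit)).symm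
      _ = op2 B (κ EHGen.b) (efam B κ (a + b)) B.unit := by rw [ih]
      _ = efam B κ (a + b + 1) := rfl

/-- The canonical family is closed under composition. -/
lemma efam_comp (m : ℕ) (k : Fin m → ℕ) :
    B.comp (efam B κ m) k (fun i => efam B κ (k i)) = efam B κ (∑ i, k i) := by
  induction m with
  | zero =>
    exact eq_of_heq ((comp_empty _ _ _).trans
      (congr_arg_heq (efam B κ) (show (0 : ℕ) = ∑ i : Fin 0, k i by simp)))
  | succ m ih =>
    show B.comp (op2 B (κ EHGen.b) (efam B κ m) B.unit) k (fun i => efam B κ (k i)) = _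
    refine eq_of_heq (HEq.trans (comp_op2 (p := m) (q := 1) _ _ _ k
      (fun i => efam B κ (k i))) ?_)
    have h1 : B.comp (efam B κ m) (fun j => k (finl m 1 j))
        (fun j => efam B κ (k (finl m 1 j))) = efam B κ (∑ j, k (finl m 1 j)) :=
      ih (fun j => k (finl m 1 j))
    have h2 : HEq (B.comp B.unit (fun j => k (finr m 1 j))
        (fun j => efam B κ (k (finr m 1 j)))) (efam B κ (k (finr m 1 0))) :=
      comp_unit_left _ _
    have hsum : (∑ j, k (finl m 1 j)) + k (finr m 1 0) = ∑ i, k i := by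
      rw [← sum_split m 1 k, Fin.sum_univ_one]
    refine HEq.trans (op2_congr _ rfl rfl (heq_of_eq h1) h2) ?_
    exact HEq.trans (heq_of_eq (efam_mul hS _ _)) (congr_arg_heq (efam B κ) hsum)

end eh2

end EHAux
namespace EHAux

variable {B : SymmetricOperad.{u}} {κ : ∀ x : EHGen.{u}, B.ops (EHar x)}

/-- Coercion into the middle block. -/
def mid (a c : ℕ) (v : Fin 2) : Fin (![a,2,c] 1) := v

lemma fsa0 (a c : ℕ) : ((finSigma ![a,2,c] ⟨1, mid a c 0⟩ : Fin _) : ℕ) = a := by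
  rw [finSigma_apply]
  unfold finSigmaVal
  have h : Finset.univ.filter (· < (1 : Fin 3)) = {0} := by decide
  rw [h, Finset.sum_singleton]
  rfl

lemma fsa1 (a c : ℕ) : ((finSigma ![a,2,c] ⟨1, mid a c 1⟩ : Fin _) : ℕ) = a + 1 := by
  rw [finSigma_apply]
  unfold finSigmaVal
  have h : Finset.univ.filter (· < (1 : Fin 3)) = {0} := by decide
  rw [h, Finset.sum_singleton]
  rfl

/-- The family of block permutations: identity, a swap in the middle block, identity. -/
noncomputable def T3 (a c : ℕ) : ∀ i : Fin 3, Equiv.Perm (Fin (![a,2,c] i)) :=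
  tripleFun (α := fun i => Equiv.Perm (Fin (![a,2,c] i))) 1 (Equiv.swap (mid a c 0) (mid a c 1)) 1

lemma bsp_eq (a c : ℕ) : blockSumPerm ![a,2,c] (T3 a c)
    = Equiv.swap (finSigma ![a,2,c] ⟨1, mid a c 0⟩) (finSigma ![a,2,c] ⟨1, mid a c 1⟩) := by
  refine Equiv.ext fun z => ?_
  obtain ⟨s, rfl⟩ := (finSigma ![a,2,c]).surjective z
  rw [blockSumPerm_apply]
  obtain ⟨i, j⟩ := s
  have hne : ∀ (i' : Fin 3) (j' : Fin (![a,2,c] i')), (i' : ℕ) ≠ 1 →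
      ∀ j'' : Fin 2, finSigma ![a,2,c] ⟨i', j'⟩ ≠ finSigma ![a,2,c] ⟨1, mid a c j''⟩ := by
    intro i' j' hi' j'' hcon
    have := congrArg (fun s : Σ i : Fin 3, Fin (![a,2,c] i) => (s.1 : ℕ))
      ((finSigma ![a,2,c]).injective hcon)
    exact hi' this
  match i with
  | ⟨0, h⟩ =>
    show finSigma ![a,2,c] ⟨⟨0, h⟩, j⟩ = Equiv.swap _ _ (finSigma ![a,2,c] ⟨⟨0, h⟩, j⟩)
    rw [Equiv.swap_apply_of_ne_of_ne (hne _ _ (by show (0:ℕ) ≠ 1; decide) 0)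
      (hne _ _ (by show (0:ℕ) ≠ 1; decide) 1)]
  | ⟨1, h⟩ =>
    match j with
    | ⟨0, hj⟩ =>
      show finSigma ![a,2,c] ⟨(1 : Fin 3),
          Equiv.swap (mid a c 0) (mid a c 1) (mid a c 0)⟩
        = Equiv.swap (finSigma ![a,2,c] ⟨1, mid a c 0⟩) (finSigma ![a,2,c] ⟨1, mid a c 1⟩)
            (finSigma ![a,2,c] ⟨(1 : Fin 3), mid a c 0⟩)
      rw [Equiv.swap_apply_left, Equiv.swap_apply_left]
    | ⟨1, hj⟩ =>
      show finSigma ![a,2,c] ⟨(1 : Fin 3),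
          Equiv.swap (mid a c 0) (mid a c 1) (mid a c 1)⟩
        = Equiv.swap (finSigma ![a,2,c] ⟨1, mid a c 0⟩) (finSigma ![a,2,c] ⟨1, mid a c 1⟩)
            (finSigma ![a,2,c] ⟨(1 : Fin 3), mid a c 1⟩)
      rw [Equiv.swap_apply_right, Equiv.swap_apply_right]
  | ⟨2, h⟩ =>
    show finSigma ![a,2,c] ⟨⟨2, h⟩, j⟩ = Equiv.swap _ _ (finSigma ![a,2,c] ⟨⟨2, h⟩, j⟩)
    rw [Equiv.swap_apply_of_ne_of_ne (hne _ _ (by show (2:ℕ) ≠ 1; decide) 0)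
      (hne _ _ (by show (2:ℕ) ≠ 1; decide) 1)]

section eh3

variable (hS : B.Satisfies κ EHPres)
include hS

lemma act_adj (n j : ℕ) (hj : j + 1 < n) (x y : Fin n)
    (hx : (x : ℕ) = j) (hy : (y : ℕ) = j + 1) :
    B.act (Equiv.swap x y) (efam B κ n) = efam B κ n := by
  set c := n - j - 2 with hc
  have hsum : (∑ i, (![j,2,c] : Fin 3 → ℕ) i) = n := by
    rw [Fin.sum_univ_three]
    show j + 2 + c = n
    omega
  have hcomp := efam_comp hS 3 ![j,2,c]
  have hact := B.act_comp (efam B κ 3) ![j,2,c] (fun i => efam B κ (![j,2,c] i)) (T3 j c)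
  have hfix : (fun i => B.act (T3 j c i) (efam B κ (![j,2,c] i)))
      = (fun i => efam B κ (![j,2,c] i)) := by
    funext i
    match i with
    | ⟨0, _⟩ => exact B.act_one _
    | ⟨1, _⟩ =>
      exact show B.act (Equiv.swap (mid j c 0) (mid j c 1)) (efam B κ 2) = efam B κ 2 from by
        rw [efam_two hS]
        exact (gen_b_comm hS).symm
    | ⟨2, _⟩ => exact B.act_one _
  rw [hfix, hcomp, bsp_eq] at hact
  have key : HEq (B.act (Equiv.swap x y) (efam B κ n))
      (B.act (Equiv.swap (finSigma ![j,2,c] ⟨1, mid j c 0⟩) (finSigma ![j,2,c] ⟨1, mid j c 1⟩))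
        (efam B κ (∑ i, (![j,2,c] : Fin 3 → ℕ) i))) := by
    refine act_congr hsum.symm ?_ (congr_arg_heq (efam B κ) hsum.symm)
    exact swap_heq hsum.symm (by rw [hx, fsa0]) (by rw [hy, fsa1])
  refine eq_of_heq (key.trans ?_)
  rw [← hact]
  exact congr_arg_heq (efam B κ) hsum

lemma act_swap_aux (d : ℕ) : ∀ (n : ℕ) (x y : Fin n), (y : ℕ) = (x : ℕ) + d + 1 →
    B.act (Equiv.swap x y) (efam B κ n) = efam B κ n := by
  induction d with
  | zero =>
    intro n x y hxy
    have hyn : (y : ℕ) < n := y.isLt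
    exact act_adj hS n (x : ℕ) (by omega) x y rfl (by omega)
  | succ d ih =>
    intro n x y hxy
    have hyn : (y : ℕ) < n := y.isLt
    have hzn : (x : ℕ) + d + 1 < n := by omega
    set z : Fin n := ⟨(x : ℕ) + d + 1, hzn⟩ with hzdef
    have hzval : (z : ℕ) = (x : ℕ) + d + 1 := rfl
    have hxz : x ≠ z := by
      intro hcon
      have := congrArg Fin.val hcon
      rw [hzval] at this
      omega
    have hxy' : x ≠ y := by
      intro hcon
      have := congrArg Fin.val hcon
      omega
    have hkey : Equiv.swap z y * Equiv.swap x z * Equiv.swap z y = Equiv.swap y x :=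
      Equiv.swap_mul_swap_mul_swap hxz hxy'
    have h1 : B.act (Equiv.swap z y) (efam B κ n) = efam B κ n :=
      act_adj hS n (z : ℕ) (by omega) z y rfl (by omega)
    have h2 : B.act (Equiv.swap x z) (efam B κ n) = efam B κ n :=
      ih n x z hzval
    rw [Equiv.swap_comm, ← hkey, B.act_mul, B.act_mul, h1, h2, h1]

lemma act_swap (n : ℕ) (x y : Fin n) :
    B.act (Equiv.swap x y) (efam B κ n) = efam B κ n := by
  rcases Nat.lt_trichotomy (x : ℕ) (y : ℕ) with h | h | h
  · exact act_swap_aux hS ((y : ℕ) - (x : ℕ) - 1) n x y (by omega)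
  · rw [Fin.ext h, Equiv.swap_self]
    exact B.act_one _
  · rw [Equiv.swap_comm]
    exact act_swap_aux hS ((x : ℕ) - (y : ℕ) - 1) n y x (by omega)

/-- The canonical family is invariant under the symmetric group actions. -/
lemma efam_act (n : ℕ) (t : Equiv.Perm (Fin n)) :
    B.act t (efam B κ n) = efam B κ n := by
  refine Equiv.Perm.swap_induction_on t (B.act_one _) ?_
  intro f x y hxy hP
  rw [B.act_mul, hP, act_swap hS]

end eh3

end EHAux
namespace EHAux

/-- Extensionality for symmetric-operad morphisms. -/
lemma homExt {B C : SymmetricOperad.{u}} {g h : B.Hom C} (H : g.app = h.app) : g = h := by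
  cases g; cases h; cases H; rfl

/-- The constant morphism into an operad presented by the Eckmann–Hilton presentation. -/
noncomputable def constHom (B' A : SymmetricOperad.{u}) (ι : ∀ x : EHGen.{u}, A.ops (EHar x))
    (hSat : A.Satisfies ι EHPres) : B'.Hom A where
  app := fun n _ => efam A ι n
  app_unit := efam_one hSat
  app_comp := fun {m} _ρ k _f => (efam_comp hSat m k).symm
  app_act := fun {n} t _ρ => (efam_act hSat n t).symm

/-- The identity morphism. -/
def idHom (A : SymmetricOperad.{u}) : A.Hom A where
  app := fun _n ρ => ρ
  app_unit := rfl
  app_comp := fun _ _ _ => rfl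
  app_act := fun _ _ => rfl

end EHAux

open EHAux in
open FreePlain in
theorem eckmann_hilton_key
    (A : SymmetricOperad.{u}) (ι : ∀ x : EHGen.{u}, A.ops (EHar x))
    (hA : A.IsPresentedBy ι EHPres) :
    ∀ (n : ℕ) (ρ : A.ops n), ρ = efam A ι n := by
  obtain ⟨hSat, hUniv⟩ := hA
  obtain ⟨h₀, _, hu⟩ := hUniv A ι hSat
  have hc : constHom A A ι hSat = h₀ := by
    refine hu _ fun x => ?_
    match x with
    | EHGen.i => rfl
    | EHGen.i' => exact gen_i_eq hSat
    | EHGen.b => exact efam_two hSat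
    | EHGen.b' => exact (efam_two hSat).trans (gen_b_eq hSat)
  have hid : idHom A = h₀ := hu (idHom A) fun x => rfl
  intro n ρ
  exact (congrArg (fun g : A.Hom A => g.app n ρ) (hid.trans hc.symm))

open EHAux in
open FreePlain in
/-- **Statement 6 (Eckmann–Hilton).** The symmetric operad presented by generators
`i, i′` of arity 0 and `b, b′` of arity 2 subject to the unit relations and the
interchange relation `b ∘ (b′, b′) = (2 3)·(b′ ∘ (b, b))` is the terminal symmetric
operad (the operad for commutative monoids); in particular, in this presented operad,
`i = i′`, `b = b′`, `b = (1 2)·b`, and `b ∘ (id, b) = b ∘ (b, id)`. -/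
theorem eckmann_hilton_presentation_is_terminal
    (A : SymmetricOperad.{u}) (ι : ∀ x : EHGen.{u}, A.ops (EHar x))
    (hA : A.IsPresentedBy ι EHPres) :
    (∀ B : SymmetricOperad.{u}, ∃! _h : B.Hom A, True) ∧
    ι EHGen.i = ι EHGen.i' ∧
    ι EHGen.b = ι EHGen.b' ∧
    ι EHGen.b = A.act (Equiv.swap (0 : Fin 2) 1) (ι EHGen.b) ∧
    ((of2 EHGen.b rfl leaf (of2 EHGen.b rfl leaf leaf)).eval A.toPlain ι
      = (of2 EHGen.b rfl (of2 EHGen.b rfl leaf leaf) leaf).eval A.toPlain ι) := by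
  have hSat := hA.1
  have huniq := eckmann_hilton_key A ι hA
  refine ⟨?_, gen_i_eq hSat, gen_b_eq hSat, gen_b_comm hSat, ?_⟩
  · intro B
    refine ⟨constHom B A ι hSat, trivial, ?_⟩
    intro g _
    refine homExt (funext fun n => funext fun ρ => ?_)
    exact huniq n (g.app n ρ)
  · simp only [eval_of2_b]
    show op2 A (ι EHGen.b) A.unit (op2 A (ι EHGen.b) A.unit A.unit)
      = op2 A (ι EHGen.b) (op2 A (ι EHGen.b) A.unit A.unit) A.unit
    erw [op2_unit_unit]
    exact gen_b_assoc hSat
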